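/- Let A be an n-dimensional anticommutative algebra over ℂ (n ≥ 3) with basis e_1,...,e_n, structure constants satisfying c_{ij}^k = 0 for k ≤ max(i,j), and e_i e_{i+1} = e_{i+2} for all 1 ≤ i ≤ n-2. Then the annihilator of A equals span(e_n). -/
import Mathlib

noncomputable def mulC {n : ℕ} (c : Fin n → Fin n → Fin n → ℂ) (v w : Fin n → ℂ) : Fin n → ℂ :=
  fun k => ∑ i, ∑ j, v i * w j * c i j k

lemma mulC_single_left {n : ℕ} (c : Fin n → Fin n → Fin n → ℂ) (a : Fin n) (v : Fin n → ℂ)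
    (k : Fin n) : mulC c (Pi.single a 1) v k = ∑ j, v j * c a j k := by
  unfold mulC
  rw [Finset.sum_eq_single a]
  · simp
  · intro b _ hb; simp [Pi.single_apply, hb]
  · simp

lemma mulC_single_right {n : ℕ} (c : Fin n → Fin n → Fin n → ℂ) (b : Fin n) (v : Fin n → ℂ)
    (k : Fin n) : mulC c v (Pi.single b 1) k = ∑ i, v i * c i b k := by
  unfold mulC
  apply Finset.sum_congr rfl
  intro i _
  rw [Finset.sum_eq_single b]
  · simp
  · intro j _ hj; simp [Pi.single_apply, hj]
  · simp

lemma mulC_single_single {n : ℕ} (c : Fin n → Fin n → Fin n → ℂ) (a b k : Fin n) :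
    mulC c (Pi.single a 1) (Pi.single b 1) k = c a b k := by
  rw [mulC_single_left, Finset.sum_eq_single b]
  · simp
  · intro j _ hj; simp [Pi.single_apply, hj]
  · simp

/-- For an `n`-dimensional anticommutative complex algebra (`n ≥ 3`) with structure
constants vanishing for `k ≤ max(i,j)` and with `e_i e_{i+1} = e_{i+2}` for
`1 ≤ i ≤ n-2`, the annihilator equals the span of `e_n`. -/
theorem ann_of_anticommutative_chain {n : ℕ} (hn : 3 ≤ n)
    (c : Fin n → Fin n → Fin n → ℂ)
    (hanti : ∀ i j k : Fin n, c i j k = -c j i k)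
    (hc : ∀ i j k : Fin n, k.val ≤ max i.val j.val → c i j k = 0)
    (hchain : ∀ i : ℕ, (h : i + 2 < n) →
      mulC c (Pi.single (⟨i, by omega⟩ : Fin n) (1 : ℂ))
        (Pi.single (⟨i + 1, by omega⟩ : Fin n) (1 : ℂ)) =
      Pi.single (⟨i + 2, by omega⟩ : Fin n) (1 : ℂ)) :
    ∀ v : Fin n → ℂ,
      (∀ w, mulC c v w = 0 ∧ mulC c w v = 0) ↔
        ∃ t : ℂ, v = t • (Pi.single (⟨n - 1, by omega⟩ : Fin n) 1 : Fin n → ℂ) := by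
  have csq : ∀ i k : Fin n, c i i k = 0 := by
    intro i k
    have h := hanti i i k
    linear_combination h / 2
  have cval : ∀ i : ℕ, (h : i + 2 < n) →
      c ⟨i, by omega⟩ ⟨i + 1, by omega⟩ ⟨i + 2, by omega⟩ = 1 := by
    intro i h
    have h1 : c ⟨i, by omega⟩ ⟨i + 1, by omega⟩ ⟨i + 2, by omega⟩ =
        (Pi.single (⟨i + 2, by omega⟩ : Fin n) 1 : Fin n → ℂ) ⟨i + 2, by omega⟩ := by
      rw [← hchain i h, mulC_single_single]
    rw [h1, Pi.single_apply, if_pos rfl]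
  intro v
  constructor
  · intro hv
    have key : ∀ m : ℕ, ∀ hmn : m < n, m < n - 1 → v ⟨m, hmn⟩ = 0 := by
      intro m
      induction m using Nat.strong_induction_on with
      | _ m ih =>
        intro hmn hm
        rcases m with _ | p
        · -- m = 0
          have h2 : 0 + 2 < n := by omega
          have h0 := congrFun (hv (Pi.single (⟨1, by omega⟩ : Fin n) 1)).1 ⟨2, by omega⟩
          rw [mulC_single_right, Pi.zero_apply,
            Finset.sum_eq_single (⟨0, by omega⟩ : Fin n)] at h0
          · rw [cval 0 h2, mul_one] at h0
            exact h0
          · intro b _ hb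
            rcases Nat.lt_or_ge b.val 2 with hb2 | hb2
            · have hb1 : b = (⟨1, by omega⟩ : Fin n) := by
                have hne : b.val ≠ 0 := fun hh => hb (Fin.ext hh)
                exact Fin.ext (show b.val = 1 by omega)
              rw [hb1, csq, mul_zero]
            · rw [hc b ⟨1, by omega⟩ ⟨2, by omega⟩ (le_max_of_le_left hb2), mul_zero]
          · simp
        · -- m = p + 1
          have h2 : p + 2 < n := by omega
          have h0 := congrFun (hv (Pi.single (⟨p, by omega⟩ : Fin n) 1)).2 ⟨p + 2, by omega⟩
          rw [mulC_single_left, Pi.zero_apply,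
            Finset.sum_eq_single (⟨p + 1, by omega⟩ : Fin n)] at h0
          · rw [cval p h2, mul_one] at h0
            exact h0
          · intro b _ hb
            rcases Nat.lt_or_ge b.val (p + 1) with hb2 | hb2
            · rw [ih b.val (by omega) b.isLt (by omega), zero_mul]
            · have hbv : p + 2 ≤ b.val := by
                have hne : b.val ≠ p + 1 := fun hh => hb (Fin.ext hh)
                omega
              rw [hc ⟨p, by omega⟩ b ⟨p + 2, by omega⟩ (le_max_of_le_right hbv), mul_zero]
          · simp
    refine ⟨v ⟨n - 1, by omega⟩, funext fun i => ?_⟩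
    rw [Pi.smul_apply, Pi.single_apply, smul_eq_mul]
    by_cases h : i = (⟨n - 1, by omega⟩ : Fin n)
    · rw [if_pos h, mul_one, h]
    · rw [if_neg h, mul_zero]
      have h1 : i.val < n - 1 := by
        have : i.val ≠ n - 1 := fun hh => h (Fin.ext hh)
        omega
      exact key i.val i.isLt h1
  · rintro ⟨t, rfl⟩ w
    have hl : ∀ (j k : Fin n), c (⟨n - 1, by omega⟩ : Fin n) j k = 0 := fun j k =>
      hc _ j k (le_max_of_le_left (show k.val ≤ n - 1 by omega))
    have hr : ∀ (i k : Fin n), c i (⟨n - 1, by omega⟩ : Fin n) k = 0 := fun i k =>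
      hc i _ k (le_max_of_le_right (show k.val ≤ n - 1 by omega))
    constructor
    · funext k
      rw [Pi.zero_apply]
      show (∑ i, ∑ j, (t • (Pi.single (⟨n - 1, by omega⟩ : Fin n) 1 : Fin n → ℂ)) i
          * w j * c i j k) = 0
      apply Finset.sum_eq_zero
      intro i _
      apply Finset.sum_eq_zero
      intro j _
      rcases eq_or_ne i (⟨n - 1, by omega⟩ : Fin n) with hi | hi
      · rw [hi, hl j k, mul_zero]
      · rw [Pi.smul_apply, Pi.single_apply, if_neg hi, smul_zero, zero_mul, zero_mul]
    · funext k
      rw [Pi.zero_apply]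
      show (∑ i, ∑ j, w i * (t • (Pi.single (⟨n - 1, by omega⟩ : Fin n) 1 : Fin n → ℂ)) j
          * c i j k) = 0
      apply Finset.sum_eq_zero
      intro i _
      apply Finset.sum_eq_zero
      intro j _
      rcases eq_or_ne j (⟨n - 1, by omega⟩ : Fin n) with hj | hj
      · rw [hj, hr i k, mul_zero]
      · rw [Pi.smul_apply, Pi.single_apply, if_neg hj, smul_zero, mul_zero, zero_mul]
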